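/- Let k ≥ 7 and r > k be integers with r − k even. Let G be a finite simple r-regular graph and let G' be the disjoint union of G and the gadget graph gdg_{k,r}. If there exists a set S ⊆ V(G') such that G' ⊕ S is r-regular, then G contains a clique of size k. -/

import Mathlib

/-- The partial complement `G ⊕ S` of a simple graph `G` with respect to a vertex set `S`:
distinct vertices `u, v` are adjacent iff either they are adjacent in `G` and not both
belong to `S`, or they are nonadjacent in `G` and both belong to `S`. -/
def SimpleGraph.partialComplement {V : Type*} (G : SimpleGraph V) (S : Set V) :
    SimpleGraph V where
  Adj u v := u ≠ v ∧ ((G.Adj u v ∧ ¬(u ∈ S ∧ v ∈ S)) ∨ (¬ G.Adj u v ∧ u ∈ S ∧ v ∈ S))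
  symm := by
    refine ⟨?_⟩
    intro u v h
    obtain ⟨hne, h⟩ := h
    refine ⟨hne.symm, ?_⟩
    rcases h with ⟨ha, hs⟩ | ⟨ha, hu, hv⟩
    · exact Or.inl ⟨ha.symm, fun hc => hs ⟨hc.2, hc.1⟩⟩
    · exact Or.inr ⟨fun hvu => ha hvu.symm, hv, hu⟩
  loopless := ⟨fun v h => h.1 rfl⟩

/-- The vertex type of the gadget `gdg_{k,r}`: `Sum.inl i` is the clique vertex
`c_{i+1}`, and `Sum.inr (i, j, false)` / `Sum.inr (i, j, true)` are the vertices
`a^{i+1}_{j+1}` / `b^{i+1}_{j+1}` respectively. -/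
abbrev GadgetVertex (k r : ℕ) := Fin (k - 1) ⊕ (Fin (k - 1) × Fin r × Bool)

/-- The gadget graph `gdg_{k,r}`: the vertices `c_1, …, c_{k-1}` form a clique; for each
`i`, the vertices `a^i_1, …, a^i_r, b^i_1, …, b^i_r` form a complete bipartite graph
`K_{r,r}` minus the matching `{a^i_j b^i_j : j ≤ (r-k)/2}`; and `c_i` is joined to
`a^i_j` and `b^i_j` for all `j ≤ (r-k)/2`. -/
def gadgetGraph (k r : ℕ) : SimpleGraph (GadgetVertex k r) :=
  SimpleGraph.fromRel (fun x y =>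
    match x, y with
    | Sum.inl _, Sum.inl _ => True
    | Sum.inl i, Sum.inr (i', j, _) => i = i' ∧ (j : ℕ) < (r - k) / 2
    | Sum.inr (i', j, _), Sum.inl i => i = i' ∧ (j : ℕ) < (r - k) / 2
    | Sum.inr (i, j, s), Sum.inr (i', l, t) =>
        i = i' ∧ s ≠ t ∧ ¬(j = l ∧ (j : ℕ) < (r - k) / 2))


/-!
Write `H = G ⊔ gdg_{k,r}` and let `H ⊕ S` be `r`-regular. A vertex outside `S` keeps its degree,
and a vertex `x ∈ S` of degree `d` gets degree `d + |S| - 1 - 2 |N(x) ∩ S|`. The vertices `c_i`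
have degree `r - 2`, so they all lie in `S`. A vertex `a^i_j` or `b^i_j` in `S` would need about
`|S| / 2` neighbours in `S`, all but `c_i` on the opposite side of its block; then both sides of
that block hold about `|S| / 2` vertices of `S`, which together with the `k - 1 ≥ 4` vertices
`c_i` is more than `|S|`. So `S` meets the gadget exactly in the `c_i`, the equation at `c_i` gives
`|S| = 2k - 1`, and `S ∩ V(G)` consists of `k` vertices, each with `k - 1` neighbours in it.
-/

open Set
open scoped symmDiff

theorem Set.ncard_symmDiff_add_two_mul_ncard_inter {α : Type*} {s t : Set α}
    (hs : s.Finite := by toFinite_tac) (ht : t.Finite := by toFinite_tac) :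
    (s ∆ t).ncard + 2 * (s ∩ t).ncard = s.ncard + t.ncard := by
  rw [Set.symmDiff_def, ncard_union_eq disjoint_sdiff_sdiff hs.sdiff ht.sdiff,
    ← ncard_inter_add_ncard_sdiff_eq_ncard s t hs, ← ncard_inter_add_ncard_sdiff_eq_ncard t s ht,
    inter_comm t s]
  ring

namespace SimpleGraph

variable {V : Type*} (G : SimpleGraph V) (S : Set V) {x : V}

@[simp] theorem partialComplement_adj {u v : V} :
    (G.partialComplement S).Adj u v ↔
      u ≠ v ∧ ((G.Adj u v ∧ ¬(u ∈ S ∧ v ∈ S)) ∨ (¬G.Adj u v ∧ u ∈ S ∧ v ∈ S)) :=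
  Iff.rfl

theorem neighborSet_partialComplement_of_notMem (hx : x ∉ S) :
    (G.partialComplement S).neighborSet x = G.neighborSet x := by
  ext y
  simp only [mem_neighborSet, partialComplement_adj]
  grind [G.ne_of_adj]

theorem neighborSet_partialComplement_of_mem (hx : x ∈ S) :
    (G.partialComplement S).neighborSet x = G.neighborSet x ∆ (S \ {x}) := by
  ext y
  simp only [mem_neighborSet, partialComplement_adj, mem_symmDiff, mem_sdiff,
    mem_singleton_iff]
  grind [G.ne_of_adj, G.loopless]

theorem ncard_neighborSet_partialComplement_of_mem [Finite V] (hx : x ∈ S) :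
    ((G.partialComplement S).neighborSet x).ncard + 2 * (G.neighborSet x ∩ S).ncard + 1 =
      (G.neighborSet x).ncard + S.ncard := by
  have hinter : G.neighborSet x ∩ (S \ {x}) = G.neighborSet x ∩ S := by
    ext y
    simp only [mem_inter_iff, mem_sdiff, mem_singleton_iff, mem_neighborSet]
    exact ⟨fun h => ⟨h.1, h.2.1⟩, fun h => ⟨h.1, h.2, (G.ne_of_adj h.1).symm⟩⟩
  rw [neighborSet_partialComplement_of_mem G S hx, ← hinter,
    ncard_symmDiff_add_two_mul_ncard_inter, add_assoc, ncard_sdiff_singleton_add_one hx]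

/-- The trace `T = S ∩ V(G)` left on `G` by a set `S` with `S.ncard = s` for which the partial
complement by `S` of a graph having `G` as a union of components is `r`-regular. -/
def IsPartialComplementTrace (r s : ℕ) (T : Set V) : Prop :=
  (∀ x ∉ T, (G.neighborSet x).ncard = r) ∧
    ∀ x ∈ T, r + 2 * (G.neighborSet x ∩ T).ncard + 1 = (G.neighborSet x).ncard + s

theorem isPartialComplementTrace_preimage {W : Type*} [Finite W] {H : SimpleGraph W} {f : V → W}
    (hf : Function.Injective f) (hN : ∀ v, H.neighborSet (f v) = f '' G.neighborSet v)
    {S : Set W} {r : ℕ} (hS : ∀ y, ((H.partialComplement S).neighborSet y).ncard = r) :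
    G.IsPartialComplementTrace r S.ncard (f ⁻¹' S) := by
  constructor
  · intro v hv
    rw [← ncard_image_of_injective _ hf, ← hN, ← hS (f v),
      H.neighborSet_partialComplement_of_notMem S hv]
  · intro v hv
    have := H.ncard_neighborSet_partialComplement_of_mem S hv
    rw [hS, hN, ← image_inter_preimage, ncard_image_of_injective _ hf,
      ncard_image_of_injective _ hf] at this
    omega

theorem isClique_of_forall_ncard_le_ncard_neighborSet_inter {T : Set V} (hT : T.Finite)
    (h : ∀ v ∈ T, T.ncard ≤ (G.neighborSet v ∩ T).ncard + 1) : G.IsClique T := by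
  intro v hv w hw hvw
  have hsub : G.neighborSet v ∩ T ⊆ T \ {v} := fun u ⟨hu, huT⟩ =>
    ⟨huT, fun h => G.irrefl (h ▸ hu)⟩
  have heq := eq_of_subset_of_ncard_le hsub (by
    have := h v hv
    have := ncard_sdiff_singleton_add_one hv hT
    omega) hT.sdiff
  have : w ∈ T \ {v} := ⟨hw, hvw.symm⟩
  exact (heq ▸ this).1

end SimpleGraph

theorem Set.ncard_eq_ncard_preimage_inl_add_ncard_preimage_inr {α β : Type*} [Finite α]
    [Finite β] (S : Set (α ⊕ β)) : S.ncard = (Sum.inl ⁻¹' S).ncard + (Sum.inr ⁻¹' S).ncard := by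
  conv_lhs => rw [← image_preimage_inl_union_image_preimage_inr S]
  rw [ncard_union_eq disjoint_image_inl_image_inr, ncard_image_of_injective _ Sum.inl_injective,
    ncard_image_of_injective _ Sum.inr_injective]

section Gadget

variable {k r : ℕ}

@[simp] theorem gadgetGraph_adj_inl_inl {i i' : Fin (k - 1)} :
    (gadgetGraph k r).Adj (.inl i) (.inl i') ↔ i ≠ i' := by
  simp [gadgetGraph]

@[simp] theorem gadgetGraph_adj_inl_inr {i : Fin (k - 1)} {p : Fin (k - 1) × Fin r × Bool} :
    (gadgetGraph k r).Adj (.inl i) (.inr p) ↔ i = p.1 ∧ (p.2.1 : ℕ) < (r - k) / 2 := by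
  simp [gadgetGraph]

@[simp] theorem gadgetGraph_adj_inr_inl {i : Fin (k - 1)} {p : Fin (k - 1) × Fin r × Bool} :
    (gadgetGraph k r).Adj (.inr p) (.inl i) ↔ i = p.1 ∧ (p.2.1 : ℕ) < (r - k) / 2 := by
  rw [SimpleGraph.adj_comm, gadgetGraph_adj_inl_inr]

@[simp] theorem gadgetGraph_adj_inr_inr {p q : Fin (k - 1) × Fin r × Bool} :
    (gadgetGraph k r).Adj (.inr p) (.inr q) ↔
      p.1 = q.1 ∧ p.2.2 ≠ q.2.2 ∧ ¬(p.2.1 = q.2.1 ∧ (p.2.1 : ℕ) < (r - k) / 2) := by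
  simp only [gadgetGraph, SimpleGraph.fromRel_adj]
  grind

def gadgetSide (i : Fin (k - 1)) (t : Bool) : Set (GadgetVertex k r) :=
  range fun l => .inr (i, l, t)

theorem gadgetGraph_neighborSet_inl (i : Fin (k - 1)) :
    (gadgetGraph k r).neighborSet (.inl i) =
      .inl '' {i}ᶜ ∪ .inr '' ({i} ×ˢ {j : Fin r | (j : ℕ) < (r - k) / 2} ×ˢ univ) := by
  ext (i' | ⟨i', j, t⟩)
  · simp [ne_comm]
  · simp only [SimpleGraph.mem_neighborSet, gadgetGraph_adj_inl_inr, mem_union, mem_image,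
      mem_prod]
    grind

theorem ncard_neighborSet_gadgetGraph_inl (hkr : k ≤ r) (heven : Even (r - k)) (i : Fin (k - 1)) :
    ((gadgetGraph k r).neighborSet (.inl i)).ncard + 2 = r := by
  have hm : (r - k) / 2 ≤ r := by omega
  rw [gadgetGraph_neighborSet_inl, ncard_union_eq disjoint_image_inl_image_inr,
    ncard_image_of_injective _ Sum.inl_injective, ncard_image_of_injective _ Sum.inr_injective,
    ncard_prod, ncard_prod, ← Fin.range_castLE hm,
    ncard_range_of_injective (Fin.castLE_injective hm), ncard_compl, ncard_singleton, ncard_univ]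
  simp only [Nat.card_eq_fintype_card, Fintype.card_fin, Fintype.card_bool]
  have := i.2
  obtain ⟨m, hrk⟩ := heven
  omega

theorem gadgetGraph_neighborSet_inr_subset (i : Fin (k - 1)) (j : Fin r) (t : Bool) :
    (gadgetGraph k r).neighborSet (.inr (i, j, t)) ⊆ insert (.inl i) (gadgetSide i !t) := by
  rintro (i' | ⟨i', l, u⟩) h
  · simp_all
  · simp_all [gadgetSide, Bool.eq_not]

theorem gadgetGraph_neighborSet_inr_of_lt {i : Fin (k - 1)} {j : Fin r} (t : Bool)
    (hj : (j : ℕ) < (r - k) / 2) :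
    (gadgetGraph k r).neighborSet (.inr (i, j, t)) =
      insert (.inl i) ((fun l => .inr (i, l, !t)) '' {j}ᶜ) := by
  ext (i' | ⟨i', l, u⟩)
  · simp [hj, eq_comm]
  · simp only [SimpleGraph.mem_neighborSet, gadgetGraph_adj_inr_inr, mem_insert_iff, mem_image,
      Sum.inr.injEq, Prod.mk.injEq, Bool.not_eq_eq_eq_not, Bool.eq_not]
    grind

theorem gadgetGraph_neighborSet_inr_of_le {i : Fin (k - 1)} {j : Fin r} (t : Bool)
    (hj : (r - k) / 2 ≤ (j : ℕ)) :
    (gadgetGraph k r).neighborSet (.inr (i, j, t)) = gadgetSide i !t := by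
  ext (i' | ⟨i', l, u⟩)
  · simp only [SimpleGraph.mem_neighborSet, gadgetGraph_adj_inr_inl, gadgetSide, mem_range]
    grind
  · simp only [SimpleGraph.mem_neighborSet, gadgetGraph_adj_inr_inr, gadgetSide, mem_range,
      Sum.inr.injEq, Prod.mk.injEq, Bool.not_eq_eq_eq_not, Bool.eq_not]
    grind

theorem ncard_neighborSet_gadgetGraph_inr (i : Fin (k - 1)) (j : Fin r) (t : Bool) :
    ((gadgetGraph k r).neighborSet (.inr (i, j, t))).ncard = r := by
  have hinj : Function.Injective fun l : Fin r => (.inr (i, l, !t) : GadgetVertex k r) :=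
    fun _ _ h => by simpa using h
  rcases lt_or_ge (j : ℕ) ((r - k) / 2) with hj | hj
  · rw [gadgetGraph_neighborSet_inr_of_lt t hj, ncard_insert_of_notMem (by simp),
      ncard_image_of_injective _ hinj, ncard_compl, ncard_singleton]
    simp only [Nat.card_eq_fintype_card, Fintype.card_fin]
    omega
  · rw [gadgetGraph_neighborSet_inr_of_le t hj, gadgetSide, ncard_range_of_injective hinj]
    simp

theorem ncard_range_inl_gadgetVertex :
    (range (Sum.inl : Fin (k - 1) → GadgetVertex k r)).ncard = k - 1 := by
  rw [ncard_range_of_injective Sum.inl_injective, Nat.card_eq_fintype_card, Fintype.card_fin]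

theorem disjoint_gadgetSide_not (i : Fin (k - 1)) (t : Bool) :
    Disjoint (gadgetSide (r := r) i t) (gadgetSide i !t) := by
  rw [disjoint_left]
  rintro _ ⟨l, rfl⟩ ⟨l', h⟩
  simp at h

variable {T : Set (GadgetVertex k r)} {s : ℕ}

theorem range_inl_subset_of_isPartialComplementTrace (hkr : k ≤ r) (heven : Even (r - k))
    (hT : (gadgetGraph k r).IsPartialComplementTrace r s T) : range Sum.inl ⊆ T := by
  rintro _ ⟨i, rfl⟩
  by_contra h
  have := ncard_neighborSet_gadgetGraph_inl hkr heven i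
  rw [hT.1 _ h] at this
  omega

theorem le_two_mul_ncard_inter_gadgetSide_add_three
    (hT : (gadgetGraph k r).IsPartialComplementTrace r s T) {i : Fin (k - 1)} {j : Fin r}
    {t : Bool} (h : .inr (i, j, t) ∈ T) : s ≤ 2 * (T ∩ gadgetSide i !t).ncard + 3 := by
  have hdeg := hT.2 _ h
  rw [ncard_neighborSet_gadgetGraph_inr] at hdeg
  have hsub : (gadgetGraph k r).neighborSet (.inr (i, j, t)) ∩ T ⊆
      insert (.inl i) (T ∩ gadgetSide i !t) := fun y ⟨hy, hyT⟩ =>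
    (gadgetGraph_neighborSet_inr_subset i j t hy).imp id (⟨hyT, ·⟩)
  have := ncard_le_ncard hsub
  have := ncard_insert_le (.inl i : GadgetVertex k r) (T ∩ gadgetSide i !t)
  omega

theorem inr_notMem_of_isPartialComplementTrace (hk : 5 ≤ k) (hkr : k ≤ r)
    (heven : Even (r - k)) (hTs : T.ncard ≤ s)
    (hT : (gadgetGraph k r).IsPartialComplementTrace r s T) (p : Fin (k - 1) × Fin r × Bool) :
    Sum.inr p ∉ T := by
  obtain ⟨i, j, t⟩ := p
  intro h
  have hC := range_inl_subset_of_isPartialComplementTrace hkr heven hT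
  have hCT := ncard_le_ncard hC
  rw [ncard_range_inl_gadgetVertex] at hCT
  have h1 := le_two_mul_ncard_inter_gadgetSide_add_three hT h
  obtain ⟨_, hy, l, rfl⟩ : (T ∩ gadgetSide i !t).Nonempty :=
    nonempty_of_ncard_ne_zero (by omega)
  have h2 := le_two_mul_ncard_inter_gadgetSide_add_three hT hy
  rw [Bool.not_not] at h2
  have hd1 : Disjoint (range Sum.inl) (T ∩ gadgetSide i t ∪ T ∩ gadgetSide i !t) := by
    simp [disjoint_left, gadgetSide]
  have hd2 : Disjoint (T ∩ gadgetSide i t) (T ∩ gadgetSide i !t) :=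
    (disjoint_gadgetSide_not i t).mono inter_subset_right inter_subset_right
  have hsub : range Sum.inl ∪ (T ∩ gadgetSide i t ∪ T ∩ gadgetSide i !t) ⊆ T :=
    union_subset hC (union_subset inter_subset_left inter_subset_left)
  have := ncard_le_ncard hsub
  rw [ncard_union_eq hd1, ncard_union_eq hd2, ncard_range_inl_gadgetVertex] at this
  omega

theorem eq_range_inl_of_isPartialComplementTrace (hk : 5 ≤ k) (hkr : k ≤ r)
    (heven : Even (r - k)) (hTs : T.ncard ≤ s)
    (hT : (gadgetGraph k r).IsPartialComplementTrace r s T) :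
    T = range Sum.inl ∧ s + 1 = 2 * k := by
  have hC := range_inl_subset_of_isPartialComplementTrace hkr heven hT
  have hTeq : T = range Sum.inl := by
    refine Subset.antisymm ?_ hC
    rintro (i | p) h
    · exact ⟨i, rfl⟩
    · exact absurd h (inr_notMem_of_isPartialComplementTrace hk hkr heven hTs hT p)
  refine ⟨hTeq, ?_⟩
  let i : Fin (k - 1) := ⟨0, by omega⟩
  have hN : (gadgetGraph k r).neighborSet (.inl i) ∩ T = .inl '' {i}ᶜ := by
    rw [hTeq, gadgetGraph_neighborSet_inl]
    ext (i' | p) <;> simp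
  have := hT.2 _ (hC ⟨i, rfl⟩)
  have hdeg := ncard_neighborSet_gadgetGraph_inl hkr heven i
  rw [hN, ncard_image_of_injective _ Sum.inl_injective, ncard_compl, ncard_singleton,
    Nat.card_eq_fintype_card, Fintype.card_fin] at this
  omega

end Gadget

/-- If `G` is `r`-regular (with `7 ≤ k < r`, `r - k` even) and some partial complement
of the disjoint union `G' = G ⊔ gdg_{k,r}` is `r`-regular, then `G` contains a clique
of size `k` (degrees are measured as the cardinalities of neighbor sets). -/
theorem clique_of_partialComplement_disjUnion_gadget_regular {V : Type*} [Fintype V]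
    (G : SimpleGraph V) (k r : ℕ) (hk : 7 ≤ k) (hkr : k < r)
    (heven : Even (r - k))
    (hreg : ∀ v : V, (G.neighborSet v).ncard = r)
    (hsol : ∃ S : Set (V ⊕ GadgetVertex k r),
      ∀ x : V ⊕ GadgetVertex k r,
        (((G ⊕g gadgetGraph k r).partialComplement S).neighborSet x).ncard = r) :
    ∃ C : Set V, G.IsClique C ∧ C.ncard = k := by
  obtain ⟨S, hS⟩ := hsol
  have hG := G.isPartialComplementTrace_preimage Sum.inl_injective
    SimpleGraph.neighborSet_sum_inl hS
  have hK := (gadgetGraph k r).isPartialComplementTrace_preimage Sum.inr_injective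
    SimpleGraph.neighborSet_sum_inr hS
  have hcard := S.ncard_eq_ncard_preimage_inl_add_ncard_preimage_inr
  obtain ⟨hT, hs⟩ := eq_range_inl_of_isPartialComplementTrace (by omega) hkr.le heven
    (by omega : (Sum.inr ⁻¹' S).ncard ≤ S.ncard) hK
  rw [hT, ncard_range_inl_gadgetVertex] at hcard
  refine ⟨Sum.inl ⁻¹' S,
    G.isClique_of_forall_ncard_le_ncard_neighborSet_inter (toFinite _) fun v hv => ?_, by omega⟩
  have := hG.2 v hv
  rw [hreg] at this
  omega
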